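/- arXiv:2410.08111 — 3 statements merged into one kernel-verified Lean document; each statement's English description precedes it below -/
import Mathlib

section
/- Let X be a measurable space, D a probability distribution on X with a distinguished sensitive coordinate x_A ∈ {−1,1} satisfying P_{x∼D}[x_A = 1] > 0 and P_{x∼D}[x_A = −1] > 0, and let h, ĥ : X → {−1,1} be two classifiers. Then |GFair(ĥ) − GFair(h)| ≤ min{ 1 , P_{x∼D}[ĥ(x) ≠ h(x)] / min(P_{x∼D}[x_A = 1], P_{x∼D}[x_A = −1]) }. -/
open MeasureTheory

/-- Conditional probability `P_μ[B ∣ A] = μ(A ∩ B)/μ(A)` as a real number. -/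
noncomputable def condProb {X : Type*} [MeasurableSpace X] (μ : Measure X)
    (B A : Set X) : ℝ :=
  (μ (A ∩ B)).toReal / (μ A).toReal

/-- Statistical parity `GFair(g) = |P[g = 1 ∣ x_A = 1] − P[g = 1 ∣ x_A = −1]|`. -/
noncomputable def gfair {X : Type*} [MeasurableSpace X] (μ : Measure X)
    (xA : X → ℝ) (g : X → ℝ) : ℝ :=
  |condProb μ {x | g x = 1} {x | xA x = 1} - condProb μ {x | g x = 1} {x | xA x = -1}|

/-- cost of reconstruction: for classifiers `h, hhat : X → {−1,1}` and a
sensitive coordinate `x_A ∈ {−1,1}` with both groups of positive probability,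
`|GFair(hhat) − GFair(h)| ≤ min{1, P[hhat ≠ h] / min(P[x_A = 1], P[x_A = −1])}`. -/
theorem cost_of_reconstruction {X : Type*} [MeasurableSpace X]
    (μ : Measure X) [IsProbabilityMeasure μ]
    (xA : X → ℝ) (hxA : Measurable xA) (hxAval : ∀ x, xA x = 1 ∨ xA x = -1)
    (hpos : 0 < μ {x | xA x = 1}) (hneg : 0 < μ {x | xA x = -1})
    (h hhat : X → ℝ) (hmh : Measurable h) (hmhhat : Measurable hhat)
    (hval : ∀ x, h x = 1 ∨ h x = -1) (hval' : ∀ x, hhat x = 1 ∨ hhat x = -1) :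
    |gfair μ xA hhat - gfair μ xA h|
      ≤ min 1 ((μ {x | hhat x ≠ h x}).toReal
          / min (μ {x | xA x = 1}).toReal (μ {x | xA x = -1}).toReal) := by
  have hfin : ∀ S : Set X, μ S ≠ ⊤ := fun S => measure_ne_top μ S
  -- condProb is in [0,1]
  have hcp01 : ∀ B A : Set X, 0 < μ A → 0 ≤ condProb μ B A ∧ condProb μ B A ≤ 1 := by
    intro B A hA
    have hA' : 0 < (μ A).toReal := ENNReal.toReal_pos hA.ne' (hfin A)
    constructor
    · exact div_nonneg ENNReal.toReal_nonneg ENNReal.toReal_nonneg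
    · rw [condProb, div_le_one hA']
      exact ENNReal.toReal_mono (hfin A) (measure_mono Set.inter_subset_left)
  -- key per-group bound
  have key : ∀ A : Set X, 0 < μ A →
      |condProb μ {x | hhat x = 1} A - condProb μ {x | h x = 1} A|
        ≤ (μ (A ∩ {x | hhat x ≠ h x})).toReal / (μ A).toReal := by
    intro A hA
    have hA' : 0 < (μ A).toReal := ENNReal.toReal_pos hA.ne' (hfin A)
    unfold condProb
    rw [div_sub_div_same, abs_div, abs_of_pos hA', div_le_div_iff_of_pos_right hA']
    have step : ∀ g1 g2 : X → ℝ,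
        (μ (A ∩ {x | g1 x = 1})).toReal
          ≤ (μ (A ∩ {x | g2 x = 1})).toReal + (μ (A ∩ {x | hhat x ≠ h x})).toReal →
        (μ (A ∩ {x | g1 x = 1})).toReal - (μ (A ∩ {x | g2 x = 1})).toReal
          ≤ (μ (A ∩ {x | hhat x ≠ h x})).toReal := by
      intro g1 g2 hle; linarith
    rw [abs_sub_le_iff]
    constructor <;>
    · refine step _ _ ?_
      rw [← ENNReal.toReal_add (hfin _) (hfin _)]
      refine ENNReal.toReal_mono (by simp [hfin]) ?_
      refine le_trans (measure_mono ?_) (measure_union_le _ _)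
      intro x ⟨hxA', hx1⟩
      by_cases hc : hhat x = h x
      · exact Or.inl ⟨hxA', by simp only [Set.mem_setOf_eq] at hx1 ⊢; first | rw [← hc]; exact hx1 | rw [hc]; exact hx1⟩
      · exact Or.inr ⟨hxA', hc⟩
  set Ap := {x | xA x = 1} with hAp
  set An := {x | xA x = -1} with hAn
  have hmp : MeasurableSet Ap := hxA (measurableSet_singleton 1)
  have hmn : MeasurableSet An := hxA (measurableSet_singleton (-1))
  have hp' : 0 < (μ Ap).toReal := ENNReal.toReal_pos hpos.ne' (hfin _)
  have hn' : 0 < (μ An).toReal := ENNReal.toReal_pos hneg.ne' (hfin _)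
  set N := {x | hhat x ≠ h x} with hN
  refine le_min ?_ ?_
  · -- bound by 1
    have h1 := hcp01 {x | hhat x = 1} Ap hpos
    have h2 := hcp01 {x | hhat x = 1} An hneg
    have h3 := hcp01 {x | h x = 1} Ap hpos
    have h4 := hcp01 {x | h x = 1} An hneg
    have g1 : 0 ≤ gfair μ xA hhat := abs_nonneg _
    have g2 : 0 ≤ gfair μ xA h := abs_nonneg _
    have g1' : gfair μ xA hhat ≤ 1 := by
      unfold gfair; rw [abs_sub_le_iff]; constructor <;> linarith [h1.1, h1.2, h2.1, h2.2]
    have g2' : gfair μ xA h ≤ 1 := by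
      unfold gfair; rw [abs_sub_le_iff]; constructor <;> linarith [h3.1, h3.2, h4.1, h4.2]
    rw [abs_sub_le_iff]; constructor <;> linarith
  · -- main bound
    have t1 : |gfair μ xA hhat - gfair μ xA h|
        ≤ |condProb μ {x | hhat x = 1} Ap - condProb μ {x | h x = 1} Ap|
          + |condProb μ {x | hhat x = 1} An - condProb μ {x | h x = 1} An| := by
      unfold gfair
      refine (abs_abs_sub_abs_le_abs_sub _ _).trans ?_
      rw [sub_sub_sub_comm]
      exact abs_sub _ _
    have k1 := key Ap hpos
    have k2 := key An hneg
    -- sum of masses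
    have hmN : MeasurableSet N := by
      have hNe : N = ((fun x => hhat x - h x) ⁻¹' {0})ᶜ := by
        ext x; simp [hN, sub_eq_zero]
      rw [hNe]
      exact ((hmhhat.sub hmh) (measurableSet_singleton 0)).compl
    have hsum : μ (Ap ∩ N) + μ (An ∩ N) ≤ μ N := by
      have hdisj : Disjoint (Ap ∩ N) (An ∩ N) := by
        refine Set.disjoint_left.mpr ?_
        rintro x ⟨hxp, -⟩ ⟨hxn, -⟩
        rw [hAp, Set.mem_setOf_eq] at hxp; rw [hAn, Set.mem_setOf_eq] at hxn
        norm_num [hxp] at hxn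
      calc μ (Ap ∩ N) + μ (An ∩ N) = μ ((Ap ∩ N) ∪ (An ∩ N)) :=
            (measure_union hdisj (hmn.inter hmN)).symm
        _ ≤ μ N := measure_mono (Set.union_subset Set.inter_subset_right Set.inter_subset_right)
    have hsumR : (μ (Ap ∩ N)).toReal + (μ (An ∩ N)).toReal ≤ (μ N).toReal := by
      rw [← ENNReal.toReal_add (hfin _) (hfin _)]
      exact ENNReal.toReal_mono (hfin _) hsum
    have hminpos : 0 < min (μ Ap).toReal (μ An).toReal := lt_min hp' hn'
    have b1 : (μ (Ap ∩ N)).toReal / (μ Ap).toReal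
        ≤ (μ (Ap ∩ N)).toReal / min (μ Ap).toReal (μ An).toReal :=
      div_le_div_of_nonneg_left ENNReal.toReal_nonneg hminpos (min_le_left _ _)
    have b2 : (μ (An ∩ N)).toReal / (μ An).toReal
        ≤ (μ (An ∩ N)).toReal / min (μ Ap).toReal (μ An).toReal :=
      div_le_div_of_nonneg_left ENNReal.toReal_nonneg hminpos (min_le_right _ _)
    calc |gfair μ xA hhat - gfair μ xA h|
        ≤ (μ (Ap ∩ N)).toReal / (μ Ap).toReal + (μ (An ∩ N)).toReal / (μ An).toReal := by
          exact t1.trans (add_le_add k1 k2)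
      _ ≤ ((μ (Ap ∩ N)).toReal + (μ (An ∩ N)).toReal) / min (μ Ap).toReal (μ An).toReal := by
          rw [add_div]; exact add_le_add b1 b2
      _ ≤ (μ N).toReal / min (μ Ap).toReal (μ An).toReal := by gcongr
end

section
/- Let X be a measurable space, D a probability distribution on X, A a sensitive coordinate with α = P_{x∼D}[x_A = 1] ∈ (0,1), and h : X → {−1,1} a classifier. Set p = P_{x∼D}[h(x) = 1], μ = GF⁺(h) − GF⁻(h), and Inf_A(h) = P_{x,y i.i.d. ∼ D}[ h(x) ≠ h(y) | x_A = 1, y_A = −1 ]. Then 2 α (1 − α) μ² + (1 − 2p)(1 − 2α) μ + 2 p (1 − p) − Inf_A(h) = 0; that is, the signed statistical parity μ is a root of the quadratic polynomial 2α(1−α) X² + (1−2p)(1−2α) X + 2p(1−p) − Inf_A(h). -/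
open MeasureTheory
open Set

lemma quad_alg2 (s t u v : ℝ) (h : s + t = 1) :
    2*s*t*(u-v)^2 + (1-2*(s*u+t*v))*(1-2*s)*(u-v) + 2*(s*u+t*v)*(1-(s*u+t*v))
      - (u+v-2*u*v) = 0 := by
  have ht : t = 1 - s := by linarith
  subst ht; ring

lemma quad_alg (a1 a2 b1 b2 : ℝ) (hs : a1 + a2 ≠ 0) (ht : b1 + b2 ≠ 0)
    (hsum : a1 + a2 + (b1 + b2) = 1) :
    2 * (a1 + a2) * (1 - (a1 + a2)) * (a1 / (a1 + a2) - b1 / (b1 + b2)) ^ 2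
      + (1 - 2 * (a1 + b1)) * (1 - 2 * (a1 + a2)) * (a1 / (a1 + a2) - b1 / (b1 + b2))
      + 2 * (a1 + b1) * (1 - (a1 + b1))
      - (a1 * b2 + a2 * b1) / ((a1 + a2) * (b1 + b2)) = 0 := by
  have h1 : (1 : ℝ) - (a1 + a2) = b1 + b2 := by linarith
  have hp : a1 + b1 = (a1 + a2) * (a1 / (a1 + a2)) + (b1 + b2) * (b1 / (b1 + b2)) := by
    field_simp
  have hInf : (a1 * b2 + a2 * b1) / ((a1 + a2) * (b1 + b2))
      = a1 / (a1 + a2) + b1 / (b1 + b2) - 2 * (a1 / (a1 + a2)) * (b1 / (b1 + b2)) := by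
    field_simp
    ring
  rw [h1, hp, hInf]
  have := quad_alg2 (a1 + a2) (b1 + b2) (a1 / (a1 + a2)) (b1 / (b1 + b2)) hsum
  linarith [this]

set_option maxHeartbeats 1000000 in
/-- for a classifier `h : X → {−1,1}` and a sensitive coordinate
`x_A ∈ {−1,1}` with `α = P[x_A = 1] ∈ (0,1)`, setting `p = P[h = 1]`,
`μ = GF⁺(h) − GF⁻(h)` (the signed statistical parity) and
`Inf_A(h) = P_{x,y i.i.d.}[h(x) ≠ h(y) ∣ x_A = 1, y_A = −1]`, the identity
`2α(1−α)μ² + (1−2p)(1−2α)μ + 2p(1−p) − Inf_A(h) = 0` holds, i.e. the signed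
statistical parity is a root of the quadratic `2α(1−α)X² + (1−2p)(1−2α)X + 2p(1−p) − Inf_A(h)`. -/
theorem statistical_parity_quadratic_root {X : Type*} [MeasurableSpace X]
    (μ : Measure X) [IsProbabilityMeasure μ]
    (xA : X → ℝ) (hxA : Measurable xA) (hxAval : ∀ x, xA x = 1 ∨ xA x = -1)
    (hα0 : 0 < (μ {x | xA x = 1}).toReal) (hα1 : (μ {x | xA x = 1}).toReal < 1)
    (h : X → ℝ) (hmh : Measurable h) (hval : ∀ x, h x = 1 ∨ h x = -1) :
    2 * (μ {x | xA x = 1}).toReal * (1 - (μ {x | xA x = 1}).toReal)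
        * (condProb μ {x | h x = 1} {x | xA x = 1}
            - condProb μ {x | h x = 1} {x | xA x = -1}) ^ 2
      + (1 - 2 * (μ {x | h x = 1}).toReal) * (1 - 2 * (μ {x | xA x = 1}).toReal)
        * (condProb μ {x | h x = 1} {x | xA x = 1}
            - condProb μ {x | h x = 1} {x | xA x = -1})
      + 2 * (μ {x | h x = 1}).toReal * (1 - (μ {x | h x = 1}).toReal)
      - condProb (μ.prod μ) {p : X × X | h p.1 ≠ h p.2}
          ({p : X × X | xA p.1 = 1} ∩ {p : X × X | xA p.2 = -1})
      = 0 := by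
  set A : Set X := {x | xA x = 1} with hA
  set H : Set X := {x | h x = 1} with hH
  have hmA : MeasurableSet A := hxA (measurableSet_singleton 1)
  have hmH : MeasurableSet H := hmh (measurableSet_singleton 1)
  have hAc : {x | xA x = -1} = Aᶜ := by
    ext x; simp only [mem_setOf_eq, mem_compl_iff, hA, mem_setOf_eq]
    rcases hxAval x with h1 | h1 <;> simp [h1] <;> norm_num
  have hHc : {x | h x = -1} = Hᶜ := by
    ext x; simp only [mem_setOf_eq, mem_compl_iff, hH, mem_setOf_eq]
    rcases hval x with h1 | h1 <;> simp [h1] <;> norm_num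
  -- real quantities
  set a1 := (μ (A ∩ H)).toReal with ha1
  set a2 := (μ (A ∩ Hᶜ)).toReal with ha2
  set b1 := (μ (Aᶜ ∩ H)).toReal with hb1
  set b2 := (μ (Aᶜ ∩ Hᶜ)).toReal with hb2
  have hfin : ∀ s : Set X, μ s ≠ ⊤ := fun s => measure_ne_top μ s
  have key : ∀ (S : Set X), μ (S ∩ H) + μ (S ∩ Hᶜ) = μ S := by
    intro S
    rw [← Set.diff_eq]
    exact measure_inter_add_diff S hmH
  have hsplitA : a1 + a2 = (μ A).toReal := by
    rw [ha1, ha2, ← ENNReal.toReal_add (hfin _) (hfin _), key]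
  have hsplitAc : b1 + b2 = (μ Aᶜ).toReal := by
    rw [hb1, hb2, ← ENNReal.toReal_add (hfin _) (hfin _), key]
  have hsplitH : a1 + b1 = (μ H).toReal := by
    rw [ha1, hb1, ← ENNReal.toReal_add (hfin _) (hfin _), inter_comm A H,
      inter_comm Aᶜ H, ← Set.diff_eq, measure_inter_add_diff H hmA]
  have hle1 : μ A ≤ 1 := by
    calc μ A ≤ μ Set.univ := measure_mono (Set.subset_univ A)
    _ = 1 := measure_univ
  have hcompl : (μ Aᶜ).toReal = 1 - (μ A).toReal := by
    rw [measure_compl hmA (hfin _), measure_univ,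
      ENNReal.toReal_sub_of_le hle1 ENNReal.one_ne_top, ENNReal.toReal_one]
  -- product part
  have hset1 : ({p : X × X | xA p.1 = 1} ∩ {p : X × X | xA p.2 = -1}) = A ×ˢ Aᶜ := by
    ext ⟨x, y⟩
    simp only [mem_inter_iff, mem_setOf_eq, mem_prod, hA, mem_setOf_eq]
    constructor
    · rintro ⟨h1, h2⟩
      refine ⟨h1, ?_⟩
      rcases hxAval y with h3 | h3
      · exfalso; rw [h3] at h2; norm_num at h2
      · intro hc; rw [hc] at h3; norm_num at h3
    · rintro ⟨h1, h2⟩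
      refine ⟨h1, ?_⟩
      rcases hxAval y with h3 | h3
      · exact absurd h3 h2
      · exact h3
  have hset2 : (A ×ˢ Aᶜ) ∩ {p : X × X | h p.1 ≠ h p.2}
      = ((A ∩ H) ×ˢ (Aᶜ ∩ Hᶜ)) ∪ ((A ∩ Hᶜ) ×ˢ (Aᶜ ∩ H)) := by
    ext ⟨x, y⟩
    simp only [mem_inter_iff, mem_prod, mem_union, mem_setOf_eq, mem_compl_iff, hH,
      mem_setOf_eq]
    constructor
    · rintro ⟨⟨hx, hy⟩, hne⟩
      rcases hval x with h1 | h1 <;> rcases hval y with h2 | h2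
      · exact absurd (h1.trans h2.symm) hne
      · left; refine ⟨⟨hx, h1⟩, hy, ?_⟩; rw [h2]; norm_num
      · right; refine ⟨⟨hx, ?_⟩, hy, h2⟩; rw [h1]; norm_num
      · exact absurd (h1.trans h2.symm) hne
    · rintro (⟨⟨hx, hx1⟩, hy, hy1⟩ | ⟨⟨hx, hx1⟩, hy, hy1⟩)
      · refine ⟨⟨hx, hy⟩, ?_⟩
        rcases hval y with h2 | h2
        · exact absurd h2 hy1
        · rw [hx1, h2]; norm_num
      · refine ⟨⟨hx, hy⟩, ?_⟩
        rcases hval x with h2 | h2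
        · exact absurd h2 hx1
        · rw [h2, hy1]; norm_num
  have hdisj : Disjoint ((A ∩ H) ×ˢ (Aᶜ ∩ Hᶜ)) ((A ∩ Hᶜ) ×ˢ (Aᶜ ∩ H)) := by
    rw [Set.disjoint_left]
    rintro ⟨x, y⟩ ⟨⟨_, hx⟩, _⟩ ⟨⟨_, hx'⟩, _⟩
    exact hx' hx
  have hprodmeas : (μ.prod μ) (({p : X × X | xA p.1 = 1} ∩ {p : X × X | xA p.2 = -1})
      ∩ {p : X × X | h p.1 ≠ h p.2}) = μ (A ∩ H) * μ (Aᶜ ∩ Hᶜ) + μ (A ∩ Hᶜ) * μ (Aᶜ ∩ H) := by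
    rw [hset1, hset2,
      measure_union hdisj ((hmA.inter hmH.compl).prod (hmA.compl.inter hmH)),
      Measure.prod_prod, Measure.prod_prod]
  have hprodbase : (μ.prod μ) ({p : X × X | xA p.1 = 1} ∩ {p : X × X | xA p.2 = -1})
      = μ A * μ Aᶜ := by
    rw [hset1, Measure.prod_prod]
  -- express condProbs
  have hcp1 : condProb μ {x | h x = 1} {x | xA x = 1} = a1 / (a1 + a2) := by
    rw [condProb, hsplitA]
  have hcp2 : condProb μ {x | h x = 1} {x | xA x = -1} = b1 / (b1 + b2) := by
    rw [condProb, hAc, hsplitAc]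
  have hcp3 : condProb (μ.prod μ) {p : X × X | h p.1 ≠ h p.2}
      ({p : X × X | xA p.1 = 1} ∩ {p : X × X | xA p.2 = -1})
      = (a1 * b2 + a2 * b1) / ((a1 + a2) * (b1 + b2)) := by
    rw [condProb, hprodmeas, hprodbase, hsplitA, hsplitAc,
      ENNReal.toReal_add (by finiteness) (by finiteness),
      ENNReal.toReal_mul, ENNReal.toReal_mul, ENNReal.toReal_mul]
  rw [hcp1, hcp2, hcp3, ← hsplitH]
  have hAval : (μ {x | xA x = 1}).toReal = a1 + a2 := hsplitA.symm
  rw [hAval]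
  have hs : 0 < a1 + a2 := hsplitA ▸ hα0
  have ht : 0 < b1 + b2 := by
    rw [hsplitAc, hcompl]; linarith [hsplitA ▸ hα1]
  have hsum : (a1 + a2) + (b1 + b2) = 1 := by
    rw [hsplitA, hsplitAc, hcompl]; ring
  exact quad_alg a1 a2 b1 b2 (ne_of_gt hs) (ne_of_gt ht) hsum
end

section
/- Let h, h' : {−1,1}^n → {−1,1} and let A ∈ {1,…,n} be the sensitive coordinate. If ĥ(S) = ĥ'(S) for every S ⊆ {1,…,n} such that A ∈ S or S = ∅ (Fourier coefficients taken with respect to the uniform distribution on {−1,1}^n), then GFair(h) = GFair(h'), i.e., h and h' have equal statistical parity under the uniform distribution. -/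
open Finset

/-- The parity function `χ_S(x) = ∏_{i ∈ S} x_i` on `{-1,1}^n`, encoding the cube as
`Fin n → Bool` with `true ↦ 1` and `false ↦ -1`. -/
def chi (n : ℕ) (S : Finset (Fin n)) (x : Fin n → Bool) : ℝ :=
  ∏ i ∈ S, (if x i then (1 : ℝ) else -1)

/-- The Fourier coefficient `ĥ(S) = E_{x ∼ uniform}[h(x) χ_S(x)]`. -/
noncomputable def fCoeff (n : ℕ) (h : (Fin n → Bool) → ℝ) (S : Finset (Fin n)) : ℝ :=
  (∑ x : Fin n → Bool, h x * chi n S x) / 2 ^ n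

/-- `P_{x ∼ uniform}[h(x) = 1 ∣ x_A = b]` for the group with sensitive coordinate equal
to `b` (`b = true` encodes `x_A = 1`, `b = false` encodes `x_A = -1`). -/
noncomputable def condPos (n : ℕ) (A : Fin n) (b : Bool) (h : (Fin n → Bool) → ℝ) : ℝ :=
  ((Finset.univ.filter (fun x : Fin n → Bool => x A = b ∧ h x = 1)).card : ℝ)
    / ((Finset.univ.filter (fun x : Fin n → Bool => x A = b)).card : ℝ)

lemma hcard (n : ℕ) (A : Fin n) :
    (univ.filter fun x : Fin n → Bool => x A = true).card
      = (univ.filter fun x : Fin n → Bool => x A = false).card := by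
  apply Finset.card_bij' (fun x _ => Function.update x A (!x A))
      (fun x _ => Function.update x A (!x A))
  all_goals
    intro x hx
    simp only [mem_filter, mem_univ, true_and] at hx
    simp [hx, Function.update_idem]

lemma h2D (n : ℕ) (A : Fin n) :
    (univ.filter fun x : Fin n → Bool => x A = true).card
      + (univ.filter fun x : Fin n → Bool => x A = true).card = 2 ^ n := by
  have h1 := Finset.card_filter_add_card_filter_not
    (s := (univ : Finset (Fin n → Bool))) (p := fun x => x A = true)
  simp only [Bool.not_eq_true, Finset.card_univ] at h1
  rw [show ((univ.filter fun a : Fin n → Bool => a A = false).card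
      = (univ.filter fun x : Fin n → Bool => x A = true).card) from (hcard n A).symm] at h1
  simpa [Fintype.card_fun] using h1

lemma key (n : ℕ) (A : Fin n) (h : (Fin n → Bool) → ℝ) (hh : ∀ x, h x = 1 ∨ h x = -1) :
    condPos n A true h - condPos n A false h = fCoeff n h {A} := by
  have hchiA : ∀ x : Fin n → Bool, chi n {A} x = if x A = true then (1:ℝ) else -1 := by
    intro x; simp [chi]
  have hind : ∀ b : Bool, ((univ.filter fun x : Fin n → Bool => x A = b ∧ h x = 1).card : ℝ)
      = ∑ x : Fin n → Bool, (if x A = b then (h x + 1)/2 else 0) := by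
    intro b
    rw [Finset.card_filter]
    push_cast
    apply Finset.sum_congr rfl
    intro x _
    rcases hh x with h1 | h1 <;> by_cases hb : x A = b <;> simp [h1, hb]
    · norm_num
  have hsumchi : ∑ x : Fin n → Bool, chi n {A} x = 0 := by
    have e : ∑ x : Fin n → Bool, chi n {A} x
        = ((univ.filter fun x : Fin n → Bool => x A = true).card : ℝ)
          - ((univ.filter fun x : Fin n → Bool => x A = false).card : ℝ) := by
      rw [Finset.card_filter, Finset.card_filter]
      push_cast
      rw [← Finset.sum_sub_distrib]
      apply Finset.sum_congr rfl
      intro x _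
      cases hx : x A <;> simp [hchiA, hx]
    rw [e, hcard n A]; ring
  have hT : ((univ.filter fun x : Fin n → Bool => x A = true ∧ h x = 1).card : ℝ)
      - ((univ.filter fun x : Fin n → Bool => x A = false ∧ h x = 1).card : ℝ)
      = (∑ x : Fin n → Bool, h x * chi n {A} x) / 2 := by
    rw [hind true, hind false, ← Finset.sum_sub_distrib]
    have e : ∀ x : Fin n → Bool,
        (if x A = true then (h x + 1)/2 else 0) - (if x A = false then (h x + 1)/2 else 0)
        = (h x * chi n {A} x + chi n {A} x) / 2 := by
      intro x
      cases hx : x A <;> simp [hchiA, hx] <;> try ring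
    rw [Finset.sum_congr rfl (fun x _ => e x), ← Finset.sum_div,
      Finset.sum_add_distrib, hsumchi]
    ring
  have hDR : ((univ.filter fun x : Fin n → Bool => x A = true).card : ℝ)
      + ((univ.filter fun x : Fin n → Bool => x A = true).card : ℝ) = 2 ^ n := by
    exact_mod_cast h2D n A
  unfold condPos fCoeff
  rw [show ((univ.filter fun x : Fin n → Bool => x A = false).card
      = (univ.filter fun x : Fin n → Bool => x A = true).card) from (hcard n A).symm,
    div_sub_div_same, hT, div_div]
  congr 1
  linarith [hDR]

/-- manipulation-proofness: if two classifiers `h, h' : {-1,1}^n → {-1,1}`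
have the same Fourier coefficients on every set `S` with `A ∈ S` or `S = ∅`, then they
have the same statistical parity `GFair = |GF⁺ − GF⁻|` under the uniform distribution. -/
theorem manipulation_proof_statistical_parity (n : ℕ) (A : Fin n)
    (h h' : (Fin n → Bool) → ℝ)
    (hh : ∀ x, h x = 1 ∨ h x = -1) (hh' : ∀ x, h' x = 1 ∨ h' x = -1)
    (hcoeff : ∀ S : Finset (Fin n), (A ∈ S ∨ S = ∅) → fCoeff n h S = fCoeff n h' S) :
    |condPos n A true h - condPos n A false h|
      = |condPos n A true h' - condPos n A false h'| := by
  rw [key n A h hh, key n A h' hh', hcoeff {A} (Or.inl (by simp))]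
end
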